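/- arXiv:2507.09451 — 2 statements merged into one kernel-verified Lean document; each statement's English description precedes it below -/
import Mathlib

section
/- Let $S = \{u_1, \ldots, u_d\} \subset \mathbb{Z}^n$ span $\mathbb{R}^n$ and suppose that every subset of $n$ linearly independent vectors of $S$ forms a $\mathbb{Z}$-basis of the lattice $\mathbb{Z}^n$. Then every linearly independent subset of $S$ can be extended to a $\mathbb{Z}$-basis of $\mathbb{Z}^n$. -/
/-- If `S = {u_1, …, u_d} ⊂ ℤ^n` spans `ℝ^n` and every subset of `n` linearly independent
vectors of `S` forms a `ℤ`-basis of `ℤ^n`, then every linearly independent subset of `S`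
can be extended to a `ℤ`-basis of `ℤ^n`. -/
theorem stmt5 (n d : ℕ) (u : Fin d → (Fin n → ℤ))
    (uR : Fin d → (Fin n → ℝ)) (huR : ∀ i k, uR i k = (u i k : ℝ))
    (hspan : Submodule.span ℝ (Set.range uR) = ⊤)
    (hbasis : ∀ s : Finset (Fin d), s.card = n →
      LinearIndependent ℝ (fun i : s => uR i) →
      Submodule.span ℤ (u '' ↑s) = ⊤) :
    ∀ s : Finset (Fin d), LinearIndependent ℝ (fun i : s => uR i) →
      ∃ b : Module.Basis (Fin n) ℤ (Fin n → ℤ), ∀ i ∈ s, u i ∈ Set.range b := by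
  classical
  intro s hs
  -- The image set `uR '' s` is linearly independent.
  have hsim : LinearIndependent ℝ (fun x : (uR '' (↑s : Set (Fin d))) => (x : Fin n → ℝ)) :=
    LinearIndepOn.id_image hs
  obtain ⟨b, hb_sub, hsb, hspanb, hbind⟩ :=
    exists_linearIndepOn_id_extension hsim (Set.image_subset_range uR ↑s)
  have hfin : b.Finite := hbind.setFinite
  have hspanb' : Submodule.span ℝ b = ⊤ := by
    rw [eq_top_iff, ← hspan]
    exact Submodule.span_le.mpr hspanb
  haveI : Fintype b := hfin.fintype
  let B : Module.Basis b ℝ (Fin n → ℝ) :=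
    Module.Basis.mk hbind (by simp only [id]; rw [Subtype.range_coe, hspanb'])
  have hcard : Fintype.card b = n := by
    have h1 := Module.finrank_eq_card_basis B
    simpa using h1.symm
  -- injectivity of uR on s
  have hsInj : ∀ i ∈ s, ∀ j ∈ s, uR i = uR j → i = j := by
    intro i hi j hj hij
    have := hs.injective (a₁ := ⟨i, hi⟩) (a₂ := ⟨j, hj⟩) hij
    exact Subtype.ext_iff.mp this
  -- choose preimages for elements of b
  have hchoice : ∀ v : b, ∃ i : Fin d,
      uR i = v ∧ ((v : Fin n → ℝ) ∈ uR '' (↑s : Set (Fin d)) → i ∈ s) := by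
    intro v
    by_cases hv : (v : Fin n → ℝ) ∈ uR '' (↑s : Set (Fin d))
    · obtain ⟨i, hi, hiv⟩ := hv
      exact ⟨i, hiv, fun _ => hi⟩
    · obtain ⟨i, hiv⟩ := hb_sub v.2
      exact ⟨i, hiv, fun h => absurd h hv⟩
  choose F hF1 hF2 using hchoice
  have hFinj : Function.Injective F := fun v w h =>
    Subtype.ext (by rw [← hF1 v, ← hF1 w, h])
  let t : Finset (Fin d) := Finset.univ.image F
  have htcard : t.card = n := by
    rw [Finset.card_image_of_injective _ hFinj, Finset.card_univ, hcard]
  have hst : s ⊆ t := by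
    intro i hi
    have hib : uR i ∈ b := hsb ⟨i, hi, rfl⟩
    have hFi : F ⟨uR i, hib⟩ ∈ s := hF2 ⟨uR i, hib⟩ ⟨i, hi, rfl⟩
    have : F ⟨uR i, hib⟩ = i := hsInj _ hFi _ hi (by rw [hF1])
    rw [← this]
    exact Finset.mem_image.mpr ⟨⟨uR i, hib⟩, Finset.mem_univ _, rfl⟩
  have ht_mem : ∀ i ∈ t, uR i ∈ b := by
    intro i hi
    obtain ⟨v, -, rfl⟩ := Finset.mem_image.mp hi
    rw [hF1]; exact v.2
  have he_inj : Function.Injective (fun i : t => (⟨uR i, ht_mem i i.2⟩ : b)) := by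
    rintro ⟨x, hx⟩ ⟨y, hy⟩ hxy
    simp only [Subtype.mk.injEq] at hxy
    obtain ⟨v, -, rfl⟩ := Finset.mem_image.mp hx
    obtain ⟨w, -, rfl⟩ := Finset.mem_image.mp hy
    have : v = w := Subtype.ext (by rw [← hF1 v, ← hF1 w]; exact hxy)
    simp [this]
  have htind : LinearIndependent ℝ (fun i : t => uR i) :=
    hbind.comp _ he_inj
  have hZ : Submodule.span ℤ (u '' (↑t : Set (Fin d))) = ⊤ := hbasis t htcard htind
  -- build the ℤ-basis
  let e0 := t.equivFinOfCardEq htcard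
  let v : Fin n → (Fin n → ℤ) := fun j => u (e0.symm j)
  have hrange : Set.range v = u '' (↑t : Set (Fin d)) := by
    have h1 : Set.range (fun j : Fin n => ((e0.symm j : t) : Fin d)) = (↑t : Set (Fin d)) := by
      ext x
      constructor
      · rintro ⟨j, rfl⟩; exact (e0.symm j).2
      · intro hx; exact ⟨e0 ⟨x, hx⟩, by simp⟩
    calc Set.range v = u '' Set.range (fun j : Fin n => ((e0.symm j : t) : Fin d)) := by
          rw [← Set.range_comp]; rfl
      _ = u '' (↑t : Set (Fin d)) := by rw [h1]
  have hspanv : Submodule.span ℤ (Set.range v) = ⊤ := by rw [hrange]; exact hZ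
  let P := Pi.basisFun ℤ (Fin n)
  let g := P.constr ℤ v
  have hgsurj : Function.Surjective g := by
    rw [← LinearMap.range_eq_top, Module.Basis.constr_range, hspanv]
  have hginj : Function.Injective g :=
    OrzechProperty.injective_of_surjective_endomorphism g hgsurj
  let E := LinearEquiv.ofBijective g ⟨hginj, hgsurj⟩
  refine ⟨P.map E, ?_⟩
  intro i hi
  have hit : i ∈ t := hst hi
  refine ⟨e0 ⟨i, hit⟩, ?_⟩
  have : (P.map E) (e0 ⟨i, hit⟩) = v (e0 ⟨i, hit⟩) := by
    simp [Module.Basis.map_apply, E, g, LinearEquiv.ofBijective_apply, Module.Basis.constr_basis]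
    exact Module.Basis.constr_basis P ℤ v _
  rw [this]
  simp [v]
end

section
/- Let $S = \{u_1, \ldots, u_d\} \subset \mathbb{Z}^n$ span $\mathbb{R}^n$, and suppose every subset of $n$ linearly independent vectors of $S$ is a $\mathbb{Z}$-basis of $\mathbb{Z}^n$. Let $\mathcal{I} \subset \{1,\ldots,d\}$, let $W$ be the $\mathbb{R}$-linear span of $\{u_i : i \in \mathcal{I}^c\}$, and let $R = W \cap \mathbb{Z}^n$. Then $R$ is a lattice in $W$ (a discrete cocompact subgroup, equivalently a free $\mathbb{Z}$-module of rank $\dim_{\mathbb{R}} W$ spanning $W$), and every subset of $\dim_{\mathbb{R}} W$ linearly independent vectors of $\{u_i : i \in \mathcal{I}^c\}$ is a $\mathbb{Z}$-basis of $R$. -/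
/-- The coordinatewise cast `ℤ^n → ℝ^n` as a `ℤ`-linear map. -/
noncomputable def castLM (n : ℕ) : (Fin n → ℤ) →ₗ[ℤ] (Fin n → ℝ) where
  toFun v := fun i => (v i : ℝ)
  map_add' a b := by funext i; simp
  map_smul' c v := by funext i; push_cast; simp

open Submodule Module Set

lemma range_coe_finset {α β : Type*} (f : α → β) (s : Finset α) :
    Set.range (fun i : s => f i) = f '' ↑s := by
  ext y; simp

/-- Index-picking lemma: given a linearly independent set `b` of vectors inside `uR '' J`
containing `uR '' s`, find an index finset `T ⊇ s` inside `J` realizing `b`. -/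
lemma pick_lemma {n d : ℕ} (uR : Fin d → (Fin n → ℝ)) (J : Set (Fin d))
    (s : Finset (Fin d)) (hsJ : ↑s ⊆ J) (hinjs : Set.InjOn uR ↑s)
    (b : Set (Fin n → ℝ)) (hbJ : b ⊆ uR '' J) (hsb : uR '' ↑s ⊆ b)
    (hbfin : b.Finite) (hli : LinearIndependent ℝ ((↑) : b → (Fin n → ℝ))) :
    ∃ T : Finset (Fin d), s ⊆ T ∧ ↑T ⊆ J ∧ uR '' ↑T = b ∧
      T.card = hbfin.toFinset.card ∧ LinearIndependent ℝ (fun i : T => uR i) := by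
  classical
  have hchoice : ∀ y ∈ b, ∃ i, i ∈ J ∧ (y ∈ uR '' ↑s → i ∈ s) ∧ uR i = y := by
    intro y hy
    by_cases hys : y ∈ uR '' ↑s
    · obtain ⟨i, hi, rfl⟩ := hys
      exact ⟨i, hsJ hi, fun _ => hi, rfl⟩
    · obtain ⟨i, hiJ, rfl⟩ := hbJ hy
      exact ⟨i, hiJ, fun h => absurd h hys, rfl⟩
  choose f hfJ hfs hfu using hchoice
  set T : Finset (Fin d) := hbfin.toFinset.attach.image
      (fun y => f y.1 (hbfin.mem_toFinset.mp y.2)) with hT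
  have hmemT : ∀ i, i ∈ T ↔ ∃ y : { y // y ∈ hbfin.toFinset },
      f y.1 (hbfin.mem_toFinset.mp y.2) = i := by
    intro i
    simp [hT]
  have huRT : ∀ i ∈ T, uR i ∈ b := by
    intro i hi
    obtain ⟨y, hy⟩ := (hmemT i).mp hi
    rw [← hy, hfu]
    exact hbfin.mem_toFinset.mp y.2
  have hsT : s ⊆ T := by
    intro i hi
    have hyb : uR i ∈ b := hsb ⟨i, hi, rfl⟩
    have h1 : f (uR i) hyb ∈ s := hfs _ hyb ⟨i, hi, rfl⟩
    have h2 : uR (f (uR i) hyb) = uR i := hfu _ hyb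
    have : f (uR i) hyb = i := hinjs h1 hi h2
    exact (hmemT i).mpr ⟨⟨uR i, hbfin.mem_toFinset.mpr hyb⟩, this⟩
  have hTJ : ↑T ⊆ J := by
    intro i hi
    obtain ⟨y, hy⟩ := (hmemT i).mp hi
    rw [← hy]; exact hfJ _ _
  have himg : uR '' ↑T = b := by
    apply Set.Subset.antisymm
    · rintro _ ⟨i, hi, rfl⟩
      exact huRT i hi
    · intro y hy
      refine ⟨f y hy, ?_, hfu y hy⟩
      exact (hmemT _).mpr ⟨⟨y, hbfin.mem_toFinset.mpr hy⟩, rfl⟩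
  have hcard : T.card = hbfin.toFinset.card := by
    rw [hT, Finset.card_image_of_injective _ ?_, Finset.card_attach]
    intro y z hyz
    dsimp only at hyz
    apply Subtype.ext
    rw [← hfu y.1 (hbfin.mem_toFinset.mp y.2), ← hfu z.1 (hbfin.mem_toFinset.mp z.2), hyz]
  have hliT : LinearIndependent ℝ (fun i : T => uR i) := by
    have einj : Function.Injective (fun i : T => (⟨uR i.1, huRT i.1 i.2⟩ : b)) := by
      intro i j hij
      have hU : uR i.1 = uR j.1 := congrArg Subtype.val hij
      obtain ⟨y, hy⟩ := (hmemT i.1).mp i.2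
      obtain ⟨z, hz⟩ := (hmemT j.1).mp j.2
      have hy' : uR i.1 = y.1 := by rw [← hy, hfu]
      have hz' : uR j.1 = z.1 := by rw [← hz, hfu]
      have hyz : y = z := Subtype.ext (by rw [← hy', ← hz', hU])
      apply Subtype.ext
      rw [← hy, ← hz]
      subst hyz
      rfl
    exact hli.comp _ einj
  exact ⟨T, hsT, hTJ, himg, hcard, hliT⟩

/-- Let `S = {u_1, …, u_d} ⊂ ℤ^n` span `ℝ^n` with every `n` linearly independent vectors of
`S` a `ℤ`-basis of `ℤ^n`.  For `𝓘 ⊂ {1,…,d}`, let `W` be the `ℝ`-span of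
`{u_i : i ∈ 𝓘ᶜ}` and `R = W ∩ ℤ^n`.  Then `R` is a lattice in `W`: it is a free `ℤ`-module
of rank `dim W` which spans `W`, and every subset of `dim W` linearly independent vectors
of `{u_i : i ∈ 𝓘ᶜ}` is a `ℤ`-basis of `R`. -/
theorem stmt6 (n d : ℕ) (u : Fin d → (Fin n → ℤ))
    (uR : Fin d → (Fin n → ℝ)) (huR : ∀ i, uR i = castLM n (u i))
    (hspan : Submodule.span ℝ (Set.range uR) = ⊤)
    (hbasis : ∀ s : Finset (Fin d), s.card = n →
      LinearIndependent ℝ (fun i : s => uR i) →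
      Submodule.span ℤ (u '' ↑s) = ⊤)
    (I : Set (Fin d))
    (W : Submodule ℝ (Fin n → ℝ)) (hW : W = Submodule.span ℝ (uR '' Iᶜ))
    (R : Submodule ℤ (Fin n → ℤ))
    (hR : R = Submodule.comap (castLM n) (W.restrictScalars ℤ)) :
    Module.Free ℤ R ∧
    Module.finrank ℤ R = Module.finrank ℝ W ∧
    Submodule.span ℝ ((castLM n) '' R) = W ∧
    (∀ s : Finset (Fin d), ↑s ⊆ Iᶜ → s.card = Module.finrank ℝ W →
      LinearIndependent ℝ (fun i : s => uR i) →
      LinearIndependent ℤ (fun i : s => u i) ∧ Submodule.span ℤ (u '' ↑s) = R) := by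
  classical
  have hinjcast : Function.Injective (fun r : ℤ => r • (1 : ℝ)) := by
    intro a b h
    simpa using h
  have hindepZ : ∀ (s : Finset (Fin d)), LinearIndependent ℝ (fun i : s => uR i) →
      LinearIndependent ℤ (fun i : s => u i) := by
    intro s hs
    have h1 : LinearIndependent ℤ (fun i : s => uR i) := hs.restrict_scalars hinjcast
    have h2 : LinearIndependent ℤ ((castLM n) ∘ (fun i : s => u i)) := by
      convert h1 using 1
      funext i
      exact (huR i).symm
    exact h2.of_comp (castLM n)
  have hmemW : ∀ i : Fin d, i ∈ Iᶜ → uR i ∈ W := by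
    intro i hi
    rw [hW]
    exact subset_span ⟨i, hi, rfl⟩
  have huRinR : ∀ i : Fin d, i ∈ Iᶜ → u i ∈ R := by
    intro i hi
    rw [hR]
    simpa [Submodule.mem_comap, ← huR i] using hmemW i hi
  -- key claim: part 4
  have key : ∀ s : Finset (Fin d), ↑s ⊆ Iᶜ → s.card = Module.finrank ℝ W →
      LinearIndependent ℝ (fun i : s => uR i) →
      LinearIndependent ℤ (fun i : s => u i) ∧ Submodule.span ℤ (u '' ↑s) = R := by
    intro s hsI hscard hsli
    refine ⟨hindepZ s hsli, ?_⟩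
    have hinjs : Set.InjOn uR ↑s := by
      rw [Set.injOn_iff_injective]
      exact hsli.injective
    have hspanW : Submodule.span ℝ (uR '' ↑s) = W := by
      have hle : Submodule.span ℝ (uR '' ↑s) ≤ W := by
        rw [span_le]
        rintro _ ⟨i, hi, rfl⟩
        exact hmemW i (hsI hi)
      apply (eq_of_le_of_finrank_le hle ?_)
      rw [← range_coe_finset uR s, finrank_span_eq_card hsli]
      simp [hscard]
    -- extend s to a set of n linearly independent vectors
    have hsubrange : uR '' ↑s ⊆ Set.range uR := Set.image_subset_range _ _
    have hs_set_li : LinearIndependent ℝ ((↑) : (uR '' ↑s) → (Fin n → ℝ)) := by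
      exact LinearIndepOn.id_image (s := (↑s : Set (Fin d))) hsli
    obtain ⟨bset, hbsub, hsbset, hbspan, hbli'⟩ :=
      exists_linearIndepOn_id_extension (s := uR '' ↑s) hs_set_li hsubrange
    have hbli : LinearIndependent ℝ ((↑) : bset → (Fin n → ℝ)) := hbli'
    have hbspan' : Submodule.span ℝ bset = ⊤ := by
      rw [eq_top_iff, ← hspan, span_le]
      exact hbspan
    have hbfin : bset.Finite := hbli.setFinite
    obtain ⟨T, hsT, hTJ, himgT, hcardT, hliT⟩ :=
      pick_lemma uR Set.univ s (Set.subset_univ _) hinjs bset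
        (by rw [Set.image_univ]; exact hbsub) hsbset hbfin hbli
    have hfinb : Fintype bset := hbfin.fintype
    have hcardb : hbfin.toFinset.card = n := by
      have b1 : Basis bset ℝ (Fin n → ℝ) := Basis.mk hbli (by rw [Subtype.range_coe, hbspan'])
      have h2 := Module.finrank_eq_card_basis b1
      rw [Module.finrank_pi] at h2
      simp only [Fintype.card_fin] at h2
      rw [Set.Finite.card_toFinset]
      simp [← h2]
    have hcardTn : T.card = n := hcardT.trans hcardb
    -- integer basis indexed by T
    have hZli : LinearIndependent ℤ (fun i : T => u i) := hindepZ T hliT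
    have hZspan : ⊤ ≤ Submodule.span ℤ (Set.range (fun i : T => u i)) := by
      rw [range_coe_finset, hbasis T hcardTn hliT]
    let bZ : Basis T ℤ (Fin n → ℤ) := Basis.mk hZli hZspan
    -- real basis indexed by T
    have hRspan : ⊤ ≤ Submodule.span ℝ (Set.range (fun i : T => uR i)) := by
      rw [range_coe_finset, himgT, hbspan']
    let bR : Basis T ℝ (Fin n → ℝ) := Basis.mk hliT hRspan
    rw [hR]
    apply le_antisymm
    · rw [span_le]
      rintro _ ⟨i, hi, rfl⟩
      have := huRinR i (hsI hi)
      rwa [hR] at this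
    · intro x hx
      have hxW : castLM n x ∈ W := hx
      set c : T → ℤ := fun i => bZ.repr x i with hc
      have hxsum : x = ∑ i : T, c i • u i := by
        conv_lhs => rw [← bZ.sum_repr x]
        refine Finset.sum_congr rfl fun i _ => ?_
        simp [bZ, c, Basis.coe_mk]
      have hcastsum : castLM n x = ∑ i : T, ((c i : ℝ)) • uR i := by
        rw [hxsum, map_sum]
        refine Finset.sum_congr rfl fun i _ => ?_
        rw [map_smul, ← huR, Int.cast_smul_eq_zsmul]
      have hmem : castLM n x ∈ Submodule.span ℝ (⇑bR '' {i : T | i.1 ∈ s}) := by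
        have himg2 : ⇑bR '' {i : T | i.1 ∈ s} = uR '' ↑s := by
          ext y; constructor
          · rintro ⟨i, hi, rfl⟩; exact ⟨i.1, hi, by simp [bR, Basis.coe_mk]⟩
          · rintro ⟨j, hj, rfl⟩; exact ⟨⟨j, hsT hj⟩, hj, by simp [bR, Basis.coe_mk]⟩
        rw [himg2, hspanW]; exact hxW
      rw [Basis.mem_span_image] at hmem
      have hrepr : ⇑(bR.repr (castLM n x)) = fun i => (c i : ℝ) := by
        rw [hcastsum]
        have hterm : ∀ i : T, (i ∈ (Finset.univ : Finset T)) →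
            ((c i : ℝ)) • uR i.1 = ((c i : ℝ)) • bR i := by
          intro i _
          simp [bR, Basis.coe_mk]
        rw [Finset.sum_congr rfl hterm]
        exact bR.repr_sum_self _
      have hzero : ∀ i : T, i.1 ∉ s → c i = 0 := by
        intro i hi
        have h0 : (bR.repr (castLM n x)) i = 0 := by
          by_contra h
          exact hi (hmem (Finsupp.mem_support_iff.mpr h))
        rw [hrepr] at h0
        have h1 : ((c i : ℝ)) = 0 := h0
        exact_mod_cast h1
      rw [hxsum]
      apply Submodule.sum_mem
      intro i _
      by_cases his : i.1 ∈ s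
      · exact Submodule.smul_mem _ _ (subset_span ⟨i.1, his, rfl⟩)
      · rw [hzero i his, zero_smul]
        exact zero_mem _
  -- extract a basis of W indexed by a finset s0 ⊆ Iᶜ
  obtain ⟨bset, hbsub, hbspan, hbli⟩ := exists_linearIndependent ℝ (uR '' Iᶜ)
  have hbfin : bset.Finite := hbli.setFinite
  obtain ⟨s0, -, hs0I, himg0, hcard0, hli0⟩ :=
    pick_lemma uR Iᶜ ∅ (by simp) (by simp) bset hbsub (by simp) hbfin hbli
  have hspan0 : Submodule.span ℝ (uR '' ↑s0) = W := by rw [himg0, hbspan, ← hW]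
  have hfinb : Fintype bset := hbfin.fintype
  have hWb : W = Submodule.span ℝ bset := by rw [hW, ← hbspan]
  have hcardW : s0.card = Module.finrank ℝ W := by
    rw [hcard0, hbfin.card_toFinset, hWb, finrank_span_set_eq_card hbli, Set.toFinset_card]
  obtain ⟨hli0Z, hspan0Z⟩ := key s0 hs0I hcardW hli0
  -- basis of R indexed by s0
  have hmemR : ∀ i : s0, u i ∈ R := fun i => huRinR i.1 (hs0I i.2)
  let v : s0 → R := fun i => ⟨u i, hmemR i⟩
  have hvli : LinearIndependent ℤ v := by
    apply LinearIndependent.of_comp R.subtype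
    exact hli0Z
  have hvspan : ⊤ ≤ Submodule.span ℤ (Set.range v) := by
    have himgv : R.subtype '' Set.range v = u '' ↑s0 := by
      ext y
      constructor
      · rintro ⟨_, ⟨i, rfl⟩, rfl⟩
        exact ⟨i.1, i.2, rfl⟩
      · rintro ⟨j, hj, rfl⟩
        exact ⟨v ⟨j, hj⟩, ⟨⟨j, hj⟩, rfl⟩, rfl⟩
    have hmap : Submodule.map R.subtype (Submodule.span ℤ (Set.range v)) =
        Submodule.map R.subtype ⊤ := by
      rw [Submodule.map_span, himgv, hspan0Z, Submodule.map_top, Submodule.range_subtype]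
    exact (Submodule.map_injective_of_injective R.injective_subtype hmap).ge
  let bV : Basis s0 ℤ R := Basis.mk hvli hvspan
  have hfr : Module.finrank ℤ R = Module.finrank ℝ W := by
    rw [Module.finrank_eq_card_basis bV, Fintype.card_coe, hcardW]
  refine ⟨inferInstance, hfr, ?_, key⟩
  apply le_antisymm
  · rw [span_le]
    rintro _ ⟨x, hx, rfl⟩
    rw [hR] at hx
    exact hx
  · calc W = Submodule.span ℝ (uR '' ↑s0) := hspan0.symm
      _ ≤ Submodule.span ℝ ((castLM n) '' ↑R) := by
          apply span_mono
          rintro _ ⟨i, hi, rfl⟩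
          exact ⟨u i, huRinR i (hs0I hi), (huR i).symm⟩
end
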